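/- arXiv:2510.10170 — 9 statements merged into one kernel-verified Lean document; each statement's English description precedes it below -/
import Mathlib

section
/- Let R be a commutative ring, S a multiplicative subset of R, and let 0 → A →f B →g C → 0 be a u-S-split short u-S-exact sequence of R-modules. If B is u-S-pseudo-projective, then both A and C are u-S-pseudo-projective. -/
/-!  Definitions for uniformly-S-pseudo-projective modules
(M. Adarbeh, M. Saleh, "Uniformly-S-pseudo-projective modules"). -/

universe u v w

/-- `S` is a multiplicative subset of the commutative ring `R`:
`1 ∈ S`, `0 ∉ S`, and `S` is closed under multiplication. -/
def IsMultSubset {R : Type u} [CommRing R] (S : Set R) : Prop :=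
  1 ∈ S ∧ (0 : R) ∉ S ∧ ∀ ⦃a b : R⦄, a ∈ S → b ∈ S → a * b ∈ S

/-- An `R`-module `T` is `u`-`S`-torsion if some `s ∈ S` annihilates it. -/
def IsUSTorsion {R : Type u} [CommRing R] (S : Set R) (T : Type v) [AddCommGroup T]
    [Module R T] : Prop :=
  ∃ s ∈ S, ∀ t : T, s • t = 0

/-- `f` is a `u`-`S`-monomorphism: its kernel is `u`-`S`-torsion. -/
def IsUSMono {R : Type u} [CommRing R] (S : Set R) {M : Type v} {N : Type w}
    [AddCommGroup M] [Module R M] [AddCommGroup N] [Module R N] (f : M →ₗ[R] N) : Prop :=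
  ∃ s ∈ S, ∀ m ∈ LinearMap.ker f, s • m = (0 : M)

/-- `f` is a `u`-`S`-epimorphism: its cokernel is `u`-`S`-torsion. -/
def IsUSEpi {R : Type u} [CommRing R] (S : Set R) {M : Type v} {N : Type w}
    [AddCommGroup M] [Module R M] [AddCommGroup N] [Module R N] (f : M →ₗ[R] N) : Prop :=
  ∃ s ∈ S, ∀ n : N, s • n ∈ LinearMap.range f

/-- `f` is a `u`-`S`-isomorphism: both a `u`-`S`-monomorphism and a `u`-`S`-epimorphism. -/
def IsUSIso {R : Type u} [CommRing R] (S : Set R) {M : Type v} {N : Type w}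
    [AddCommGroup M] [Module R M] [AddCommGroup N] [Module R N] (f : M →ₗ[R] N) : Prop :=
  IsUSMono S f ∧ IsUSEpi S f

/-- `P` is `u`-`S`-pseudo-projective: for every submodule `K` of `P` there is `s ∈ S` such that
every `u`-`S`-epimorphism `f : P → P/K` satisfies `s • f = π_K ∘ g` for some endomorphism
`g` of `P`. -/
def IsUSPseudoProjective {R : Type u} [CommRing R] (S : Set R) (P : Type v)
    [AddCommGroup P] [Module R P] : Prop :=
  ∀ K : Submodule R P, ∃ s ∈ S, ∀ f : P →ₗ[R] P ⧸ K, IsUSEpi S f →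
    ∃ g : P →ₗ[R] P, s • f = K.mkQ.comp g

/-- `M` is `u`-`S`-quasi-projective. -/
def IsUSQuasiProjective {R : Type u} [CommRing R] (S : Set R) (M : Type v)
    [AddCommGroup M] [Module R M] : Prop :=
  ∀ K : Submodule R M, ∃ s ∈ S, ∀ f : M →ₗ[R] M ⧸ K,
    ∃ g : M →ₗ[R] M, s • f = K.mkQ.comp g

/-- `Q` is `u`-`S`-projective (test modules in `Type v₁`). -/
def IsUSProjective.{u₁, v₁, w₁} {R : Type u₁} [CommRing R] (S : Set R) (Q : Type w₁)
    [AddCommGroup Q] [Module R Q] : Prop :=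
  ∀ (B C : Type v₁) [AddCommGroup B] [AddCommGroup C] [Module R B] [Module R C]
    (g : B →ₗ[R] C), IsUSEpi S g →
      ∃ s ∈ S, ∀ h : Q →ₗ[R] C, ∃ h' : Q →ₗ[R] B, s • h = g.comp h'

/-- `M` is `u`-`S`-injective (test modules in `Type v₁`). -/
def IsUSInjective.{u₁, v₁, w₁} {R : Type u₁} [CommRing R] (S : Set R) (M : Type w₁)
    [AddCommGroup M] [Module R M] : Prop :=
  ∀ (A B : Type v₁) [AddCommGroup A] [AddCommGroup B] [Module R A] [Module R B]
    (f : A →ₗ[R] B), IsUSMono S f →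
      ∃ s ∈ S, ∀ h : A →ₗ[R] M, ∃ h' : B →ₗ[R] M, s • h = h'.comp f

/-- `E` is `u`-`S`-pseudo-injective. -/
def IsUSPseudoInjective {R : Type u} [CommRing R] (S : Set R) (E : Type v)
    [AddCommGroup E] [Module R E] : Prop :=
  ∀ K : Submodule R E, ∃ s ∈ S, ∀ f : ↥K →ₗ[R] E, IsUSMono S f →
    ∃ g : E →ₗ[R] E, g.comp K.subtype = s • f

/-- The sequence `0 → A →f B →g C → 0` is short `u`-`S`-exact. -/
def IsShortUSExact {R : Type u} [CommRing R] (S : Set R) {A B C : Type v}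
    [AddCommGroup A] [Module R A] [AddCommGroup B] [Module R B] [AddCommGroup C] [Module R C]
    (f : A →ₗ[R] B) (g : B →ₗ[R] C) : Prop :=
  IsUSMono S f ∧ IsUSEpi S g ∧
    ∃ s ∈ S, (∀ x ∈ LinearMap.ker g, s • x ∈ LinearMap.range f) ∧
      (∀ x ∈ LinearMap.range f, s • x ∈ LinearMap.ker g)

/-- The short `u`-`S`-exact sequence `0 → A →f B →g C → 0` is `u`-`S`-split:
some multiple `s • 1_A` of the identity factors back through `f`. -/
def IsUSSplitSeq {R : Type u} [CommRing R] (S : Set R) {A B : Type v}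
    [AddCommGroup A] [Module R A] [AddCommGroup B] [Module R B] (f : A →ₗ[R] B) : Prop :=
  ∃ s ∈ S, ∃ f' : B →ₗ[R] A, f'.comp f = s • (LinearMap.id : A →ₗ[R] A)

/-- `M` is a `u`-`S`-semisimple module (test sequences with modules in `Type v₁`). -/
def IsUSSemisimpleModule.{u₁, v₁} {R : Type u₁} [CommRing R] (S : Set R) (M : Type v₁)
    [AddCommGroup M] [Module R M] : Prop :=
  ∀ (A C : Type v₁) [AddCommGroup A] [AddCommGroup C] [Module R A] [Module R C]
    (f : A →ₗ[R] M) (g : M →ₗ[R] C), IsShortUSExact S f g → IsUSSplitSeq S f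

/-- `R` is a `u`-`S`-semisimple ring: every free `R`-module is `u`-`S`-semisimple. -/
def IsUSSemisimpleRing.{u₁, v₁} {R : Type u₁} [CommRing R] (S : Set R) : Prop :=
  ∀ (F : Type v₁) [AddCommGroup F] [Module R F], Module.Free R F →
    IsUSSemisimpleModule.{u₁, v₁} S F

/-- A submodule `N` of `M` is a `u`-`S`-direct summand of `M` if there is an `R`-module `N'`
and a `u`-`S`-isomorphism between `M` and `N ⊕ N'`. -/
def IsUSDirectSummand {R : Type u} [CommRing R] (S : Set R) {M : Type v}
    [AddCommGroup M] [Module R M] (N : Submodule R M) : Prop :=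
  ∃ (N' : ModuleCat.{v} R) (h : M →ₗ[R] (↥N × ↥N')), IsUSIso S h

/-- `A` is `u`-`S`-projective relative to `B`. -/
def IsUSProjectiveRel {R : Type u} [CommRing R] (S : Set R) (A : Type v) (B : Type w)
    [AddCommGroup A] [Module R A] [AddCommGroup B] [Module R B] : Prop :=
  ∀ K : Submodule R B, ∃ s ∈ S, ∀ f : A →ₗ[R] B ⧸ K,
    ∃ h : A →ₗ[R] B, s • f = K.mkQ.comp h


/-- Auxiliary: an injective linear map whose range contains `s • N` admits a linear
`u`-`S`-left-inverse. -/
theorem USAux.exists_left_inv {R : Type u} [CommRing R] {M N : Type v} [AddCommGroup M]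
    [Module R M] [AddCommGroup N] [Module R N] (e : M →ₗ[R] N) (he : Function.Injective e)
    (s : R) (hs : ∀ n : N, s • n ∈ LinearMap.range e) :
    ∃ ψ : N →ₗ[R] M, ∀ n, e (ψ n) = s • n := by
  simp only [LinearMap.mem_range] at hs
  choose ψ hψ using hs
  refine ⟨⟨⟨ψ, ?_⟩, ?_⟩, fun n => hψ n⟩
  · intro a b; apply he; simp [hψ, smul_add]
  · intro r a; apply he
    simp only [RingHom.id_apply, map_smul, hψ]
    rw [smul_comm]

/-- If `0 → A →f B →g C → 0` is a `u`-`S`-split short `u`-`S`-exact sequence and `B` is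
`u`-`S`-pseudo-projective, then so are `A` and `C`. -/
theorem uSPseudoProjective_of_uSSplit_uSExact
    {R : Type u} [CommRing R] (S : Set R) (hS : IsMultSubset S)
    {A B C : Type v} [AddCommGroup A] [Module R A] [AddCommGroup B] [Module R B]
    [AddCommGroup C] [Module R C] (f : A →ₗ[R] B) (g : B →ₗ[R] C)
    (hexact : IsShortUSExact S f g) (hsplit : IsUSSplitSeq S f)
    (hB : IsUSPseudoProjective S B) :
    IsUSPseudoProjective S A ∧ IsUSPseudoProjective S C := by
  obtain ⟨s0, hs0S, f', hf'⟩ := hsplit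
  have hf'f : ∀ a, f' (f a) = s0 • a := fun a => by
    have := LinearMap.congr_fun hf' a; simpa using this
  obtain ⟨-, ⟨s2, hs2S, hs2⟩, s3, hs3S, hker, hrng⟩ := hexact
  constructor
  · intro K
    set L : Submodule R B := K.comap f' with hL
    obtain ⟨u, huS, hu⟩ := hB L
    refine ⟨s0 * s0 * u, hS.2.2 (hS.2.2 hs0S hs0S) huS, ?_⟩
    intro φ hφ
    have hKL : K ≤ L.comap f := by
      intro k hk
      simp only [Submodule.mem_comap, hL, hf'f k]
      exact K.smul_mem s0 hk
    set fbar : (B ⧸ L) →ₗ[R] (A ⧸ K) := Submodule.mapQ L K f' le_rfl with hfbar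
    set fbar' : (A ⧸ K) →ₗ[R] (B ⧸ L) := Submodule.mapQ K L f hKL with hfbar'
    have hfb : ∀ b : B, fbar (Submodule.Quotient.mk b) = Submodule.Quotient.mk (f' b) :=
      fun b => rfl
    have hfb' : ∀ a : A, fbar' (Submodule.Quotient.mk a) = Submodule.Quotient.mk (f a) :=
      fun a => rfl
    have hfbQ : ∀ b : B, fbar (L.mkQ b) = K.mkQ (f' b) := fun b => by
      rw [Submodule.mkQ_apply, Submodule.mkQ_apply, hfb]
    have hinj : Function.Injective fbar := by
      intro x y hxy
      obtain ⟨b, rfl⟩ := Submodule.Quotient.mk_surjective L x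
      obtain ⟨b', rfl⟩ := Submodule.Quotient.mk_surjective L y
      rw [Submodule.Quotient.eq]
      have h2 : fbar (Submodule.Quotient.mk (b - b')) = 0 := by
        rw [Submodule.Quotient.mk_sub, map_sub, hxy, sub_self]
      rw [hfb, Submodule.Quotient.mk_eq_zero] at h2
      exact h2
    have hcomp : ∀ y : A ⧸ K, fbar (fbar' y) = s0 • y := by
      intro y
      obtain ⟨a, rfl⟩ := Submodule.Quotient.mk_surjective K y
      rw [hfb', hfb, hf'f, Submodule.Quotient.mk_smul]
    set Φ : B →ₗ[R] B ⧸ L := fbar'.comp (φ.comp f') with hΦ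
    obtain ⟨t, htS, ht⟩ := hφ
    have hΦepi : ∃ t' ∈ S, ∀ n : B ⧸ L, t' • n ∈ LinearMap.range Φ := by
      refine ⟨s0 * (s0 * t), hS.2.2 hs0S (hS.2.2 hs0S htS), ?_⟩
      intro z
      obtain ⟨a, ha⟩ := ht (fbar z)
      refine ⟨f a, hinj ?_⟩
      have : Φ (f a) = (s0 * t) • fbar' (fbar z) := by
        simp only [hΦ, LinearMap.comp_apply, hf'f, map_smul, ha, smul_smul]
      rw [this, map_smul, hcomp, map_smul, smul_smul]
      congr 1; ring
    obtain ⟨G, hG⟩ := hu Φ hΦepi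
    refine ⟨f'.comp (G.comp f), ?_⟩
    ext a
    have hGa : L.mkQ (G (f a)) = u • Φ (f a) := by
      have := LinearMap.congr_fun hG (f a)
      simpa using this.symm
    simp only [LinearMap.smul_apply, LinearMap.comp_apply]
    rw [← hfbQ, hGa, map_smul]
    have h5 : fbar (Φ (f a)) = (s0 * s0) • φ a := by
      simp only [hΦ, LinearMap.comp_apply, hf'f, map_smul, hcomp, smul_smul]
    rw [h5, smul_smul]
    congr 1; ring
  · -- choose preimages under g
    simp only [LinearMap.mem_range] at hs2
    choose b hb using hs2
    -- the key well-definedness lemma for the section σ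
    have key : ∀ x y : B, g x = g y →
        s3 • (s0 • x - f (f' x)) = s3 • (s0 • y - f (f' y)) := by
      intro x y hxy
      have hxy' : x - y ∈ LinearMap.ker g := by
        simp [LinearMap.mem_ker, map_sub, hxy]
      have := hker (x - y) hxy'
      rw [LinearMap.mem_range] at this
      obtain ⟨a, ha⟩ := this
      have h2 : s3 • f (f' (x - y)) = s0 • f a := by
        calc s3 • f (f' (x - y)) = f (f' (s3 • (x - y))) := by rw [map_smul, map_smul]
          _ = f (f' (f a)) := by rw [ha]
          _ = s0 • f a := by rw [hf'f, map_smul]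
      have hz : s3 • (s0 • (x - y) - f (f' (x - y))) = 0 := by
        rw [smul_sub, smul_comm s3 s0, ← ha, h2, sub_self]
      rw [← sub_eq_zero, ← hz]
      simp only [map_sub, smul_sub]
      abel
    -- the section σ : C → B with g ∘ σ = (s3 * (s0 * s2)) • id
    set σfun : C → B := fun c => s3 • (s0 • b c - f (f' (b c))) with hσfun
    have hσadd : ∀ c c' : C, σfun (c + c') = σfun c + σfun c' := by
      intro c c'
      have hg : g (b (c + c')) = g (b c + b c') := by
        rw [map_add, hb, hb, hb, smul_add]
      have := key _ _ hg
      rw [hσfun]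
      simp only []
      rw [this]
      simp only [map_add, smul_add, smul_sub]
      abel
    have hσsmul : ∀ (r : R) (c : C), σfun (r • c) = r • σfun c := by
      intro r c
      have hg : g (b (r • c)) = g (r • b c) := by
        rw [map_smul, hb, hb, smul_comm]
      have := key _ _ hg
      rw [hσfun]
      simp only []
      rw [this]
      simp only [map_smul, smul_sub]
      rw [smul_comm r s3, smul_comm r s0, smul_comm r s3]
    set σ : C →ₗ[R] B := ⟨⟨σfun, fun c c' => hσadd c c'⟩, fun r c => hσsmul r c⟩ with hσ
    have hgσ : ∀ c : C, g (σ c) = s3 • s0 • s2 • c := by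
      intro c
      have h1 : s3 • g (f (f' (b c))) = 0 := by
        have := hrng (f (f' (b c))) ⟨f' (b c), rfl⟩
        rwa [LinearMap.mem_ker, map_smul] at this
      show g (σfun c) = _
      rw [hσfun]
      simp only [map_smul, map_sub, smul_sub, h1, sub_zero, hb]
    -- now the pseudo-projectivity argument
    intro K
    set L : Submodule R B := K.comap g with hL
    obtain ⟨u, huS, hu⟩ := hB L
    set gbar : (B ⧸ L) →ₗ[R] (C ⧸ K) := Submodule.mapQ L K g le_rfl with hgbar
    have hgb : ∀ x : B, gbar (Submodule.Quotient.mk x) = Submodule.Quotient.mk (g x) :=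
      fun x => rfl
    have hgbQ : ∀ x : B, gbar (L.mkQ x) = K.mkQ (g x) := fun x => by
      rw [Submodule.mkQ_apply, Submodule.mkQ_apply, hgb]
    have hinj : Function.Injective gbar := by
      intro x y hxy
      obtain ⟨x, rfl⟩ := Submodule.Quotient.mk_surjective L x
      obtain ⟨y, rfl⟩ := Submodule.Quotient.mk_surjective L y
      rw [Submodule.Quotient.eq]
      have h2 : gbar (Submodule.Quotient.mk (x - y)) = 0 := by
        rw [Submodule.Quotient.mk_sub, map_sub, hxy, sub_self]
      rw [hgb, Submodule.Quotient.mk_eq_zero] at h2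
      exact h2
    have hgepi : ∀ y : C ⧸ K, s2 • y ∈ LinearMap.range gbar := by
      intro y
      obtain ⟨c, rfl⟩ := Submodule.Quotient.mk_surjective K y
      exact ⟨Submodule.Quotient.mk (b c), by rw [hgb, hb, Submodule.Quotient.mk_smul]⟩
    obtain ⟨ψ, hψ⟩ := USAux.exists_left_inv gbar hinj s2 hgepi
    refine ⟨u * (s2 * (s3 * (s0 * s2))), hS.2.2 huS (hS.2.2 hs2S (hS.2.2 hs3S
      (hS.2.2 hs0S hs2S))), ?_⟩
    intro φ hφ
    obtain ⟨t, htS, ht⟩ := hφ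
    set Φ : B →ₗ[R] B ⧸ L := ψ.comp (φ.comp g) with hΦ
    have hΦepi : ∃ t' ∈ S, ∀ n : B ⧸ L, t' • n ∈ LinearMap.range Φ := by
      refine ⟨s2 * (s2 * t), hS.2.2 hs2S (hS.2.2 hs2S htS), ?_⟩
      intro z
      obtain ⟨c, hc⟩ := ht (gbar z)
      refine ⟨b c, hinj ?_⟩
      have h1 : Φ (b c) = (s2 * t) • ψ (gbar z) := by
        simp only [hΦ, LinearMap.comp_apply, hb, map_smul, hc, smul_smul]
      rw [h1, map_smul, hψ, map_smul, smul_smul]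
      congr 1; ring
    obtain ⟨G, hG⟩ := hu Φ hΦepi
    refine ⟨g.comp (G.comp σ), ?_⟩
    ext c
    have hGc : L.mkQ (G (σ c)) = u • Φ (σ c) := by
      have := LinearMap.congr_fun hG (σ c)
      simpa using this.symm
    simp only [LinearMap.smul_apply, LinearMap.comp_apply]
    rw [← hgbQ, hGc, map_smul]
    have h5 : gbar (Φ (σ c)) = (s2 * (s3 * (s0 * s2))) • φ c := by
      simp only [hΦ, LinearMap.comp_apply, hψ, hgσ, map_smul, smul_smul]
      congr 1; ring
    rw [h5, smul_smul]
end

section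
/- Let R be a commutative ring, S a multiplicative subset of R, and A, B R-modules. If the direct sum A ⊕ B is u-S-pseudo-projective, then both A and B are u-S-pseudo-projective. -/
/-!  Definitions for uniformly-S-pseudo-projective modules
(M. Adarbeh, M. Saleh, "Uniformly-S-pseudo-projective modules"). -/

universe u v w

/-! Both factors are retracts of `A × B`, and pseudo-projectivity passes to a retract `A` of `M`
(maps `i : A → M`, `p : M → A` with `p ∘ i = 1`): for `K ≤ A` put `K' = p⁻¹ K`; a `u`-`S`-epimorphism
`f : A → A/K` transports to the `u`-`S`-epimorphism `φ ∘ f ∘ p : M → M/K'`, where `φ : A/K → M/K'` is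
induced by `i`, and if `g` lifts `s` times the latter, then `p ∘ g ∘ i` lifts `s • f`. -/

section

variable {R : Type u} [CommRing R] {S : Set R} {M : Type v} {N : Type w} {P : Type*}
  [AddCommGroup M] [Module R M] [AddCommGroup N] [Module R N] [AddCommGroup P] [Module R P]

theorem IsUSEpi.comp_of_surjective {f : M →ₗ[R] N} (hf : IsUSEpi S f) {p : P →ₗ[R] M}
    (hp : Function.Surjective p) : IsUSEpi S (f ∘ₗ p) := by
  obtain ⟨t, ht, hft⟩ := hf
  refine ⟨t, ht, fun n => ?_⟩
  obtain ⟨m, hm⟩ := hft n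
  obtain ⟨x, rfl⟩ := hp m
  exact ⟨x, hm⟩

theorem IsUSEpi.surjective_comp {f : M →ₗ[R] N} (hf : IsUSEpi S f) {φ : N →ₗ[R] P}
    (hφ : Function.Surjective φ) : IsUSEpi S (φ ∘ₗ f) := by
  obtain ⟨t, ht, hft⟩ := hf
  refine ⟨t, ht, fun z => ?_⟩
  obtain ⟨n, rfl⟩ := hφ z
  obtain ⟨m, hm⟩ := hft n
  exact ⟨m, by simp [hm]⟩

end

theorem IsUSPseudoProjective.of_retract {R : Type u} [CommRing R] {S : Set R}
    {M : Type v} {A : Type w} [AddCommGroup M] [Module R M] [AddCommGroup A] [Module R A]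
    (hM : IsUSPseudoProjective S M) (i : A →ₗ[R] M) (p : M →ₗ[R] A)
    (hpi : p ∘ₗ i = LinearMap.id) : IsUSPseudoProjective S A := by
  have hpi' (a : A) : p (i a) = a := LinearMap.congr_fun hpi a
  intro K
  set K' := K.comap p
  have hiK : K ≤ K'.comap i := fun a ha => by simpa [K', hpi'] using ha
  set φ := K.mapQ K' i hiK
  set ψ := K'.mapQ K p le_rfl
  have hψφ : ψ ∘ₗ φ = LinearMap.id := by
    rw [← Submodule.mapQ_comp, ← Submodule.mapQ_id K le_rfl]
    congr
  -- `m - i (p m)` lies in `K'` because `p` kills it.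
  have hmkQ : K'.mkQ = φ ∘ₗ K.mkQ ∘ₗ p := by
    ext m
    simp only [LinearMap.comp_apply, Submodule.mkQ_apply, φ, Submodule.mapQ_apply,
      Submodule.Quotient.eq]
    simp [K', hpi']
  have hφ : Function.Surjective φ :=
    .of_comp (g := K.mkQ ∘ₗ p) (by rw [← LinearMap.coe_comp, ← hmkQ]; exact K'.mkQ_surjective)
  have hp : Function.Surjective p := fun a => ⟨i a, hpi' a⟩
  obtain ⟨s, hs, hK'⟩ := hM K'
  refine ⟨s, hs, fun f hf => ?_⟩
  obtain ⟨g, hg⟩ := hK' (φ ∘ₗ f ∘ₗ p) ((hf.comp_of_surjective hp).surjective_comp hφ)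
  refine ⟨p ∘ₗ g ∘ₗ i, ?_⟩
  calc s • f = ψ ∘ₗ (s • (φ ∘ₗ f ∘ₗ p)) ∘ₗ i := by
        simp only [LinearMap.smul_comp, LinearMap.comp_smul, ← LinearMap.comp_assoc, hψφ]
        simp [LinearMap.comp_assoc, hpi]
    _ = K.mkQ ∘ₗ p ∘ₗ g ∘ₗ i := by
        rw [hg]
        simp only [← LinearMap.comp_assoc, ψ, Submodule.mapQ_mkQ]

theorem uSPseudoProjective_of_prod_general
    {R : Type u} [CommRing R] (S : Set R)
    {A : Type v} {B : Type v} [AddCommGroup A] [Module R A] [AddCommGroup B] [Module R B]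
    (hAB : IsUSPseudoProjective S (A × B)) :
    IsUSPseudoProjective S A ∧ IsUSPseudoProjective S B :=
  ⟨hAB.of_retract (LinearMap.inl R A B) (LinearMap.fst R A B) (LinearMap.fst_comp_inl R A B),
    hAB.of_retract (LinearMap.inr R A B) (LinearMap.snd R A B) (LinearMap.snd_comp_inr R A B)⟩

/-- If `A ⊕ B` is `u`-`S`-pseudo-projective, then so are `A` and `B`. -/
theorem uSPseudoProjective_of_prod
    {R : Type u} [CommRing R] (S : Set R) (hS : IsMultSubset S)
    {A : Type v} {B : Type v} [AddCommGroup A] [Module R A] [AddCommGroup B] [Module R B]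
    (hAB : IsUSPseudoProjective S (A × B)) :
    IsUSPseudoProjective S A ∧ IsUSPseudoProjective S B :=
  uSPseudoProjective_of_prod_general S hAB
end

section
/- Let R be a commutative ring, S a multiplicative subset of R, and f : A → B a u-S-isomorphism of R-modules. Then A is u-S-pseudo-projective if and only if B is u-S-pseudo-projective. -/
/-!  Definitions for uniformly-S-pseudo-projective modules
(M. Adarbeh, M. Saleh, "Uniformly-S-pseudo-projective modules"). -/

universe u v w

/-! A `u`-`S`-isomorphism `f : A → B` has a partner `g : B → A` with `g ∘ f = t • 1` and
`f ∘ g = t • 1` for some `t ∈ S`, and such a pair transports pseudo-projectivity in either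
direction. Given `K ≤ B`, test `A` against `K' = f⁻¹ K`: the maps `f, g` descend to
`B ⧸ K ⇄ A ⧸ K'` with the same property, so a `u`-`S`-epimorphism `h : B → B ⧸ K` becomes one
`A → A ⧸ K'`, which lifts; pushing the lift back through `f` and `g` costs a factor `t²`. -/

section USInverse

variable {R : Type u} [CommRing R] {S : Set R} {M : Type v} {N : Type w} {P : Type*}
  [AddCommGroup M] [Module R M] [AddCommGroup N] [Module R N] [AddCommGroup P] [Module R P]

theorem IsUSEpi.comp (hS : IsMultSubset S) {f : M →ₗ[R] N} {g : N →ₗ[R] P}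
    (hf : IsUSEpi S f) (hg : IsUSEpi S g) : IsUSEpi S (g ∘ₗ f) := by
  obtain ⟨s, hsS, hs⟩ := hf
  obtain ⟨r, hrS, hr⟩ := hg
  refine ⟨s * r, hS.2.2 hsS hrS, fun p => ?_⟩
  obtain ⟨n, hn⟩ := hr p
  obtain ⟨m, hm⟩ := hs n
  exact ⟨m, by rw [LinearMap.comp_apply, hm, map_smul, hn, mul_smul]⟩

theorem IsUSEpi.of_comp_eq_smul_id {f : M →ₗ[R] N} {g : N →ₗ[R] M} {t : R} (ht : t ∈ S)
    (hfg : f ∘ₗ g = t • LinearMap.id) : IsUSEpi S f :=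
  ⟨t, ht, fun n => ⟨g n, by simpa using congr($hfg n)⟩⟩

theorem IsUSIso.exists_comp_eq_smul_id (hS : IsMultSubset S) {f : M →ₗ[R] N}
    (hf : IsUSIso S f) : ∃ t ∈ S, ∃ g : N →ₗ[R] M,
      g ∘ₗ f = t • LinearMap.id ∧ f ∘ₗ g = t • LinearMap.id := by
  obtain ⟨⟨s₁, hs₁S, hs₁⟩, ⟨s₂, hs₂S, hs₂⟩⟩ := hf
  -- `s₁ • -` kills `ker f`, so it descends to `M ⧸ ker f ≃ range f`, which contains `s₂ • N`.
  have hker : LinearMap.ker f ≤ LinearMap.ker (s₁ • LinearMap.id) := fun m hm => by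
    simpa using hs₁ m hm
  let g : N →ₗ[R] M := (LinearMap.ker f).liftQ _ hker ∘ₗ
    f.quotKerEquivRange.symm.toLinearMap ∘ₗ
    LinearMap.codRestrict (LinearMap.range f) (s₂ • LinearMap.id) hs₂
  refine ⟨s₁ * s₂, hS.2.2 hs₁S hs₂S, g, ?_, ?_⟩
  · ext m
    have hq : f.quotKerEquivRange.symm ⟨s₂ • f m, hs₂ (f m)⟩ =
        Submodule.Quotient.mk (s₂ • m) := by
      simpa using f.quotKerEquivRange_symm_apply_image (s₂ • m) (LinearMap.mem_range_self f _)
    change (LinearMap.ker f).liftQ _ hker (f.quotKerEquivRange.symm ⟨s₂ • f m, _⟩) = _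
    simp [hq, mul_comm s₁, mul_smul]
  · ext n
    obtain ⟨m, hm⟩ := Submodule.Quotient.mk_surjective _
      (f.quotKerEquivRange.symm ⟨s₂ • n, hs₂ n⟩)
    have hfm : f m = s₂ • n := by
      simpa using congr((f.quotKerEquivRange $hm : N))
    change f ((LinearMap.ker f).liftQ _ hker (f.quotKerEquivRange.symm ⟨s₂ • n, _⟩)) = _
    simp [← hm, hfm, mul_smul]

theorem Submodule.mapQ_comp_mapQ_eq_smul_id {p : Submodule R M} {q : Submodule R N}
    {f : M →ₗ[R] N} {g : N →ₗ[R] M} {t : R} (hf : p ≤ q.comap f) (hg : q ≤ p.comap g)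
    (hgf : g ∘ₗ f = t • LinearMap.id) : q.mapQ p g hg ∘ₗ p.mapQ q f hf = t • LinearMap.id := by
  ext m
  simpa using congr(Submodule.Quotient.mk (p := p) ($hgf m))

theorem IsUSPseudoProjective.of_comp_eq_smul_id (hS : IsMultSubset S) {f : M →ₗ[R] N}
    {g : N →ₗ[R] M} {t : R} (ht : t ∈ S) (hgf : g ∘ₗ f = t • LinearMap.id)
    (hfg : f ∘ₗ g = t • LinearMap.id) (hM : IsUSPseudoProjective S M) :
    IsUSPseudoProjective S N := by
  intro K
  set K' := K.comap f
  have hK : K ≤ K'.comap g := fun k hk => by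
    simpa [K', ← LinearMap.comp_apply, hfg] using K.smul_mem t hk
  let fbar := K'.mapQ K f le_rfl
  let gbar := K.mapQ K' g hK
  obtain ⟨s, hsS, hs⟩ := hM K'
  refine ⟨s * t * t, hS.2.2 (hS.2.2 hsS ht) ht, fun h hh => ?_⟩
  have hF : IsUSEpi S (gbar ∘ₗ h ∘ₗ f) :=
    ((IsUSEpi.of_comp_eq_smul_id ht hfg).comp hS hh).comp hS
      (IsUSEpi.of_comp_eq_smul_id ht (Submodule.mapQ_comp_mapQ_eq_smul_id le_rfl hK hgf))
  obtain ⟨G, hG⟩ := hs _ hF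
  refine ⟨f ∘ₗ G ∘ₗ g, ?_⟩
  calc (s * t * t) • h = s • ((fbar ∘ₗ gbar) ∘ₗ h ∘ₗ (f ∘ₗ g)) := by
        rw [Submodule.mapQ_comp_mapQ_eq_smul_id hK le_rfl hfg, hfg]
        ext
        simp [mul_smul]
    _ = fbar ∘ₗ (s • gbar ∘ₗ h ∘ₗ f) ∘ₗ g := by
        ext
        simp
    _ = K.mkQ ∘ₗ f ∘ₗ G ∘ₗ g := by
        rw [hG]
        rfl

end USInverse

/-- If `f : A → B` is a `u`-`S`-isomorphism, then `A` is `u`-`S`-pseudo-projective if and only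
if `B` is `u`-`S`-pseudo-projective. -/
theorem uSPseudoProjective_iff_of_uSIso
    {R : Type u} [CommRing R] (S : Set R) (hS : IsMultSubset S)
    {A B : Type v} [AddCommGroup A] [Module R A] [AddCommGroup B] [Module R B]
    (f : A →ₗ[R] B) (hf : IsUSIso S f) :
    IsUSPseudoProjective S A ↔ IsUSPseudoProjective S B := by
  obtain ⟨t, ht, g, hgf, hfg⟩ := hf.exists_comp_eq_smul_id hS
  exact ⟨.of_comp_eq_smul_id hS ht hgf hfg, .of_comp_eq_smul_id hS ht hfg hgf⟩
end

section
/- Let R be a commutative ring, S a multiplicative subset of R, and A a u-S-pseudo-projective R-module. Then every u-S-epimorphism f : A → A u-S-splits; that is, there exist s ∈ S and an endomorphism e of A such that f ∘ e = s·1_A. -/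
/-!  Definitions for uniformly-S-pseudo-projective modules
(M. Adarbeh, M. Saleh, "Uniformly-S-pseudo-projective modules"). -/

universe u v w

/-!
The map `f` induces an injection `f̄ : A ⧸ ker f → A` whose range contains `t • A` (`t ∈ S`
witnessing that `f` is a `u`-`S`-epimorphism), so `t • id_A` factors as `f̄ ∘ h`, and `h` is again
a `u`-`S`-epimorphism. Pseudo-projectivity for `K = ker f` lifts `s • h` to an endomorphism `g`,
and then `f ∘ g = f̄ ∘ (s • h) = (s * t) • id_A`.
-/

theorem isUSEpi_of_comp_eq_smul_id {R : Type u} [CommRing R] {Q : Type v} {N : Type w}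
    [AddCommGroup Q] [Module R Q] [AddCommGroup N] [Module R N] (S : Set R) {φ : Q →ₗ[R] N} (hφ : Function.Injective φ)
    {h : N →ₗ[R] Q} {t : R} (htS : t ∈ S) (hφh : φ.comp h = t • LinearMap.id) :
    IsUSEpi S h := by
  refine ⟨t, htS, fun q => ⟨φ q, hφ ?_⟩⟩
  simpa [map_smul] using LinearMap.congr_fun hφh (φ q)

/-- If `A` is `u`-`S`-pseudo-projective, then every `u`-`S`-epimorphism `f : A → A`
`u`-`S`-splits: there are `s ∈ S` and an endomorphism `e` of `A` with `f ∘ e = s • 1_A`. -/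
theorem uSEpi_uSSplits_of_uSPseudoProjective
    {R : Type u} [CommRing R] (S : Set R) (hS : IsMultSubset S)
    {A : Type v} [AddCommGroup A] [Module R A] (hA : IsUSPseudoProjective S A)
    (f : A →ₗ[R] A) (hf : IsUSEpi S f) :
    ∃ s ∈ S, ∃ e : A →ₗ[R] A, f.comp e = s • (LinearMap.id : A →ₗ[R] A) := by
  obtain ⟨t, htS, ht⟩ := hf
  obtain ⟨s, hsS, hs⟩ := hA (LinearMap.ker f)
  let f' := (LinearMap.ker f).liftQ f le_rfl
  have hf'_inj : Function.Injective f' :=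
    LinearMap.ker_eq_bot.mp (Submodule.ker_liftQ_eq_bot _ _ _ le_rfl)
  let h := LinearMap.codRestrictOfInjective (t • LinearMap.id) f' hf'_inj
    (fun a => (Submodule.range_liftQ _ f le_rfl).symm ▸ ht a)
  have hf'h : f'.comp h = t • LinearMap.id := LinearMap.codRestrictOfInjective_comp ..
  obtain ⟨g, hg⟩ := hs h (isUSEpi_of_comp_eq_smul_id S hf'_inj htS hf'h)
  refine ⟨s * t, hS.2.2 hsS htS, g, ?_⟩
  calc f.comp g = f'.comp ((LinearMap.ker f).mkQ.comp g) := by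
        rw [← LinearMap.comp_assoc, Submodule.liftQ_mkQ]
    _ = (s * t) • LinearMap.id := by
        rw [← hg, LinearMap.comp_smul, hf'h, smul_smul]
end

section
/- Let R be a commutative ring, S a multiplicative subset of R, P a u-S-pseudo-projective R-module, and K a submodule of P such that the quotient P/K is isomorphic (as an R-module) to a direct summand of P. Then K is a u-S-direct summand of P; that is, there exist an R-module N' and a u-S-isomorphism between P and K ⊕ N'. -/
/-!  Definitions for uniformly-S-pseudo-projective modules
(M. Adarbeh, M. Saleh, "Uniformly-S-pseudo-projective modules"). -/

universe u v w

/-!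
If `P/K` is isomorphic to a direct summand of `P`, the projection onto that summand gives a
split surjection `P → P/K`. Lifting it along `π : P → P/K` by pseudo-projectivity yields
`j : P/K → P` with `π ∘ j = s • 1`, and `x ↦ (s • x - j (π x), s • π x)` is then a
`u`-`S`-isomorphism `P → K × P/K`, with kernel and cokernel both killed by `s * s`.
-/

open LinearMap

theorem exists_comp_eq_id_of_isCompl {R : Type*} [CommRing R] {P M : Type*}
    [AddCommGroup P] [Module R P] [AddCommGroup M] [Module R M] {A A' : Submodule R P}
    (hAA' : IsCompl A A') (e : M ≃ₗ[R] A) :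
    ∃ (q : P →ₗ[R] M) (i : M →ₗ[R] P), q ∘ₗ i = LinearMap.id :=
  ⟨e.symm.toLinearMap ∘ₗ A.projectionOnto A' hAA', A.subtype ∘ₗ e.toLinearMap, by
    ext; simp [Submodule.projectionOnto_apply_left]⟩

theorem IsUSPseudoProjective.exists_mkQ_comp_eq_smul_id {R : Type*} [CommRing R] {S : Set R}
    {P : Type*} [AddCommGroup P] [Module R P] (hP : IsUSPseudoProjective S P)
    (K : Submodule R P) {q : P →ₗ[R] P ⧸ K} {i : P ⧸ K →ₗ[R] P} (hqi : q ∘ₗ i = LinearMap.id) :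
    ∃ s ∈ S, ∃ j : P ⧸ K →ₗ[R] P, K.mkQ ∘ₗ j = s • LinearMap.id := by
  obtain ⟨s, hs, hlift⟩ := hP K
  have hq : IsUSEpi S q := ⟨s, hs, fun y => ⟨i (s • y), by rw [← comp_apply, hqi, id_apply]⟩⟩
  obtain ⟨g, hg⟩ := hlift q hq
  exact ⟨s, hs, g ∘ₗ i, by rw [← comp_assoc, ← hg, smul_comp, hqi]⟩

namespace Submodule

variable {R : Type*} [CommRing R] {P : Type*} [AddCommGroup P] [Module R P]
  (K : Submodule R P) {s : R} {j : P ⧸ K →ₗ[R] P} (hj : K.mkQ ∘ₗ j = s • LinearMap.id)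
include hj

theorem mkQ_apply_of_comp_eq_smul_id (y : P ⧸ K) : K.mkQ (j y) = s • y := by
  simpa using LinearMap.congr_fun hj y

theorem smul_sub_mem_of_mkQ_comp_eq_smul_id (x : P) : s • x - j (K.mkQ x) ∈ K := by
  rw [← Quotient.mk_eq_zero, ← mkQ_apply, map_sub, map_smul,
    K.mkQ_apply_of_comp_eq_smul_id hj, sub_self]

def smulSplitting : P →ₗ[R] K × (P ⧸ K) :=
  (codRestrict K (s • LinearMap.id - j ∘ₗ K.mkQ)
    (K.smul_sub_mem_of_mkQ_comp_eq_smul_id hj)).prod (s • K.mkQ)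

theorem smulSplitting_apply (x : P) :
    K.smulSplitting hj x = (⟨s • x - j (K.mkQ x), K.smul_sub_mem_of_mkQ_comp_eq_smul_id hj x⟩,
      s • K.mkQ x) :=
  rfl

theorem smul_smul_eq_zero_of_mem_ker_smulSplitting {x : P}
    (hx : x ∈ ker (K.smulSplitting hj)) : (s * s) • x = 0 := by
  rw [mem_ker, smulSplitting_apply, Prod.mk_eq_zero, ← ZeroMemClass.coe_eq_zero] at hx
  rw [mul_smul, sub_eq_zero.mp hx.1, ← map_smul, hx.2, map_zero]

theorem smul_smul_mem_range_smulSplitting (z : K × (P ⧸ K)) :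
    (s * s) • z ∈ range (K.smulSplitting hj) := by
  obtain ⟨k, y⟩ := z
  have hk : K.mkQ (s • (k : P) + j y) = s • y := by
    rw [map_add, map_smul, mkQ_apply, (Quotient.mk_eq_zero K).mpr k.2, smul_zero, zero_add,
      K.mkQ_apply_of_comp_eq_smul_id hj]
  refine ⟨s • (k : P) + j y, ?_⟩
  ext
  · simp only [smulSplitting_apply, hk, map_smul, smul_add, mul_smul, Prod.smul_fst,
      coe_smul]
    abel
  · simp [smulSplitting_apply, hk, mul_smul]

theorem isUSIso_smulSplitting {S : Set R} (hs : s * s ∈ S) :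
    IsUSIso S (K.smulSplitting hj) :=
  ⟨⟨s * s, hs, fun _ hx => K.smul_smul_eq_zero_of_mem_ker_smulSplitting hj hx⟩,
    ⟨s * s, hs, K.smul_smul_mem_range_smulSplitting hj⟩⟩

end Submodule

/-- If `P` is `u`-`S`-pseudo-projective and `K ≤ P` is such that `P/K` is isomorphic to a
direct summand of `P`, then `K` is a `u`-`S`-direct summand of `P`. -/
theorem uSDirectSummand_of_quotient_iso_directSummand
    {R : Type u} [CommRing R] (S : Set R) (hS : IsMultSubset S)
    {P : Type v} [AddCommGroup P] [Module R P] (hP : IsUSPseudoProjective S P)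
    (K : Submodule R P)
    (h : ∃ A A' : Submodule R P, IsCompl A A' ∧ Nonempty ((P ⧸ K) ≃ₗ[R] ↥A)) :
    IsUSDirectSummand S K := by
  obtain ⟨A, A', hAA', ⟨e⟩⟩ := h
  obtain ⟨q, i, hqi⟩ := exists_comp_eq_id_of_isCompl hAA' e
  obtain ⟨s, hs, j, hj⟩ := hP.exists_mkQ_comp_eq_smul_id K hqi
  exact ⟨ModuleCat.of R (P ⧸ K), K.smulSplitting hj, K.isUSIso_smulSplitting hj (hS.2.2 hs hs)⟩
end

section
/- Let R be a commutative ring, S a multiplicative subset of R, P a u-S-pseudo-projective R-module, and e an R-endomorphism of P. If the image of e is a direct summand of P, then the kernel of e is a u-S-direct summand of P; that is, there exist an R-module N' and a u-S-isomorphism between P and ker(e) ⊕ N'. -/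
/-!  Definitions for uniformly-S-pseudo-projective modules
(M. Adarbeh, M. Saleh, "Uniformly-S-pseudo-projective modules"). -/

universe u v w

/-!
If `range e` has a complement, projecting onto it and inverting `P ⧸ ker e ≃ range e` gives a
surjection `f : P → P ⧸ ker e` with `f ∘ e = π`. Pseudo-projectivity lifts `s • f` to an
endomorphism `g`, and then `e ∘ g ∘ e = s • e`. Such an `s`-quasi-inverse `g` makes
`x ↦ (s • x - g (e x), e x) : P → ker e × range e` an isomorphism up to multiplication
by `s`.
-/

namespace LinearMap

variable {R : Type u} [CommRing R] {P : Type v} [AddCommGroup P] [Module R P]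

theorem exists_comp_eq_mkQ_ker_of_isCompl {e : P →ₗ[R] P} {A' : Submodule R P}
    (hA : IsCompl (range e) A') : ∃ f : P →ₗ[R] P ⧸ ker e, f ∘ₗ e = (ker e).mkQ := by
  refine ⟨e.quotKerEquivRange.symm.toLinearMap ∘ₗ Submodule.projectionOnto _ _ hA, ?_⟩
  ext x
  simp only [coe_comp, LinearEquiv.coe_coe, Function.comp_apply, Submodule.mkQ_apply,
    LinearEquiv.symm_apply_eq]
  exact (Submodule.projectionOnto_apply_left hA ⟨e x, mem_range_self e x⟩).trans
    (Subtype.ext (quotKerEquivRange_apply_mk e x).symm)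

variable {e g : P →ₗ[R] P} {s : R}

theorem sub_comp_mem_ker_of_comp_comp_eq_smul (hg : e ∘ₗ g ∘ₗ e = s • e) (x : P) :
    s • x - g (e x) ∈ ker e := by
  rw [mem_ker, map_sub, map_smul, sub_eq_zero]
  exact congr($hg x).symm

def toKerProdRange (hg : e ∘ₗ g ∘ₗ e = s • e) : P →ₗ[R] ker e × range e :=
  (codRestrict (ker e) (s • id - g ∘ₗ e) (sub_comp_mem_ker_of_comp_comp_eq_smul hg)).prod
    e.rangeRestrict

theorem smul_eq_zero_of_mem_ker_toKerProdRange (hg : e ∘ₗ g ∘ₗ e = s • e) {x : P}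
    (hx : x ∈ ker (toKerProdRange hg)) : s • x = 0 := by
  have hfst := congr(($hx).1.val)
  have hsnd : e x = 0 := congr(($hx).2.val)
  simpa [toKerProdRange, hsnd] using hfst

theorem smul_mem_range_toKerProdRange (hg : e ∘ₗ g ∘ₗ e = s • e) (y : ker e × range e) :
    s • y ∈ range (toKerProdRange hg) := by
  obtain ⟨⟨k, hk⟩, ⟨_, x, rfl⟩⟩ := y
  have hge : e (g (e x)) = s • e x := congr($hg x)
  rw [mem_ker] at hk
  refine ⟨k + g (e x), Prod.ext (Subtype.ext ?_) (Subtype.ext ?_)⟩ <;>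
    simp [toKerProdRange, hk, hge]

end LinearMap

theorem IsUSEpi.of_surjective {R : Type u} [CommRing R] {S : Set R} (hS : (1 : R) ∈ S)
    {M : Type v} {N : Type w} [AddCommGroup M] [Module R M] [AddCommGroup N] [Module R N]
    {f : M →ₗ[R] N} (hf : Function.Surjective f) : IsUSEpi S f :=
  ⟨1, hS, fun n => by simpa using hf n⟩

theorem IsUSPseudoProjective.exists_comp_comp_eq_smul {R : Type u} [CommRing R] {S : Set R}
    (hS : (1 : R) ∈ S) {P : Type v} [AddCommGroup P] [Module R P] (hP : IsUSPseudoProjective S P)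
    {e : P →ₗ[R] P} {A' : Submodule R P} (hA : IsCompl (LinearMap.range e) A') :
    ∃ s ∈ S, ∃ g : P →ₗ[R] P, e ∘ₗ g ∘ₗ e = s • e := by
  obtain ⟨f, hfe⟩ := LinearMap.exists_comp_eq_mkQ_ker_of_isCompl hA
  have hf : Function.Surjective f := .of_comp (g := e) <| by
    rw [← LinearMap.coe_comp, hfe]
    exact Submodule.mkQ_surjective _
  obtain ⟨s, hs, hlift⟩ := hP (LinearMap.ker e)
  obtain ⟨g, hg⟩ := hlift f (.of_surjective hS hf)
  refine ⟨s, hs, g, LinearMap.ext fun x => ?_⟩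
  have hfx : f (e x) = Submodule.Quotient.mk x := congr($hfe x)
  have hmk : (Submodule.Quotient.mk (g (e x)) : P ⧸ LinearMap.ker e) =
      Submodule.Quotient.mk (s • x) := by
    simpa [hfx] using congr($hg (e x)).symm
  have hker := (Submodule.Quotient.eq _).1 hmk
  rw [LinearMap.mem_ker, map_sub, map_smul, sub_eq_zero] at hker
  exact hker

theorem isUSIso_toKerProdRange {R : Type u} [CommRing R] {S : Set R} {P : Type v}
    [AddCommGroup P] [Module R P] {e g : P →ₗ[R] P} {s : R} (hs : s ∈ S)
    (hg : e ∘ₗ g ∘ₗ e = s • e) : IsUSIso S (LinearMap.toKerProdRange hg) :=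
  ⟨⟨s, hs, fun _ => LinearMap.smul_eq_zero_of_mem_ker_toKerProdRange hg⟩,
    ⟨s, hs, LinearMap.smul_mem_range_toKerProdRange hg⟩⟩

/-- If `P` is `u`-`S`-pseudo-projective and `e` is an endomorphism of `P` whose image is a
direct summand of `P`, then `ker e` is a `u`-`S`-direct summand of `P`. -/
theorem uSDirectSummand_ker_of_range_directSummand
    {R : Type u} [CommRing R] (S : Set R) (hS : IsMultSubset S)
    {P : Type v} [AddCommGroup P] [Module R P] (hP : IsUSPseudoProjective S P)
    (e : P →ₗ[R] P) (h : ∃ A' : Submodule R P, IsCompl (LinearMap.range e) A') :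
    IsUSDirectSummand S (LinearMap.ker e) := by
  obtain ⟨A', hA⟩ := h
  obtain ⟨s, hs, g, hg⟩ := hP.exists_comp_comp_eq_smul hS.1 hA
  exact ⟨ModuleCat.of R (LinearMap.range e), _, isUSIso_toKerProdRange hs hg⟩
end

section
/- Let R be a commutative ring, S a multiplicative subset of R, P a u-S-pseudo-projective R-module, and A a direct summand of P. Then for every submodule K of A there exists s ∈ S such that for every u-S-epimorphism g : P → A/K there is an R-homomorphism h : P → A with s·g = π_K ∘ h, where π_K : A → A/K is the quotient map. -/
/-!  Definitions for uniformly-S-pseudo-projective modules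
(M. Adarbeh, M. Saleh, "Uniformly-S-pseudo-projective modules"). -/

universe u v w

/-!
Let `π : P → A` be the projection along a complement `A'` and `φ = π_K ∘ π : P → A/K`. Since `φ`
is surjective, `A/K ≅ P/ker φ`, so pseudo-projectivity of `P` applied to `ker φ` lifts `s • g`
along `φ` to an endomorphism `h` of `P`; then `π ∘ h` lifts `s • g` along `π_K`.
-/

theorem IsUSEpi.comp_of_surjective_s7 {R : Type u} [CommRing R] {S : Set R}
    {M N Q : Type*} [AddCommGroup M] [Module R M] [AddCommGroup N] [Module R N]
    [AddCommGroup Q] [Module R Q] {g : M →ₗ[R] N} (hg : IsUSEpi S g) {e : N →ₗ[R] Q}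
    (he : Function.Surjective e) : IsUSEpi S (e.comp g) := by
  obtain ⟨t, ht, htg⟩ := hg
  refine ⟨t, ht, fun q => ?_⟩
  obtain ⟨n, rfl⟩ := he q
  obtain ⟨m, hm⟩ := htg n
  exact ⟨m, by rw [LinearMap.comp_apply, hm, map_smul]⟩

theorem IsUSPseudoProjective.exists_lift_of_surjective {R : Type u} [CommRing R] {S : Set R}
    {P Q : Type*} [AddCommGroup P] [Module R P] [AddCommGroup Q] [Module R Q]
    (hP : IsUSPseudoProjective S P) {φ : P →ₗ[R] Q} (hφ : Function.Surjective φ) :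
    ∃ s ∈ S, ∀ g : P →ₗ[R] Q, IsUSEpi S g → ∃ h : P →ₗ[R] P, s • g = φ.comp h := by
  let e := φ.quotKerEquivOfSurjective hφ
  have he : (e : P ⧸ LinearMap.ker φ →ₗ[R] Q).comp (LinearMap.ker φ).mkQ = φ :=
    LinearMap.ext fun x => φ.quotKerEquivOfSurjective_apply_mk hφ x
  obtain ⟨s, hs, hlift⟩ := hP (LinearMap.ker φ)
  refine ⟨s, hs, fun g hg => ?_⟩
  obtain ⟨h, hh⟩ := hlift ((e.symm : Q →ₗ[R] _).comp g) (hg.comp_of_surjective_s7 e.symm.surjective)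
  refine ⟨h, ?_⟩
  calc s • g = (e : P ⧸ LinearMap.ker φ →ₗ[R] Q).comp (s • (e.symm : Q →ₗ[R] _).comp g) := by
        ext x; simp
    _ = φ.comp h := by rw [hh, ← LinearMap.comp_assoc, he]

theorem uSLift_of_uSPseudoProjective_directSummand_general
    {R : Type u} [CommRing R] (S : Set R)
    {P : Type v} [AddCommGroup P] [Module R P] (hP : IsUSPseudoProjective S P)
    (A : Submodule R P) (hA : ∃ A' : Submodule R P, IsCompl A A') :
    ∀ K : Submodule R ↥A, ∃ s ∈ S, ∀ g : P →ₗ[R] (↥A ⧸ K), IsUSEpi S g →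
      ∃ h : P →ₗ[R] ↥A, s • g = K.mkQ.comp h := by
  intro K
  obtain ⟨A', hAA'⟩ := hA
  let π := A.projectionOnto A' hAA'
  have hφ : Function.Surjective (K.mkQ.comp π) :=
    K.mkQ_surjective.comp (Submodule.projectionOnto_surjective hAA')
  obtain ⟨s, hs, hlift⟩ := hP.exists_lift_of_surjective hφ
  refine ⟨s, hs, fun g hg => ?_⟩
  obtain ⟨h, hh⟩ := hlift g hg
  exact ⟨π.comp h, hh⟩

/-- If `P` is `u`-`S`-pseudo-projective and `A` is a direct summand of `P`, then for every
submodule `K` of `A` there is `s ∈ S` such that every `u`-`S`-epimorphism `g : P → A/K`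
satisfies `s • g = π_K ∘ h` for some homomorphism `h : P → A`. -/
theorem uSLift_of_uSPseudoProjective_directSummand
    {R : Type u} [CommRing R] (S : Set R) (hS : IsMultSubset S)
    {P : Type v} [AddCommGroup P] [Module R P] (hP : IsUSPseudoProjective S P)
    (A : Submodule R P) (hA : ∃ A' : Submodule R P, IsCompl A A') :
    ∀ K : Submodule R ↥A, ∃ s ∈ S, ∀ g : P →ₗ[R] (↥A ⧸ K), IsUSEpi S g →
      ∃ h : P →ₗ[R] ↥A, s • g = K.mkQ.comp h :=
  uSLift_of_uSPseudoProjective_directSummand_general S hP A hA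
end

section
/- Let R be a commutative ring, S a multiplicative subset of R, and M an R-module. Then M is u-S-quasi-projective if and only if M ⊕ M is u-S-pseudo-projective. -/
/-!  Definitions for uniformly-S-pseudo-projective modules
(M. Adarbeh, M. Saleh, "Uniformly-S-pseudo-projective modules"). -/

universe u v w

/-! In the forward direction `M × M` is even `u`-`S`-quasi-projective, because relative
`u`-`S`-projectivity passes to binary products in both arguments. For a target `B₁ × B₂` and a
submodule `K`, lift first modulo the image `K₁` of `K` in `B₁`; the error term dies in
`B₁ ⧸ K₁`, so it lies in the image of `B₂ ⧸ K₂`, with `K₂ = K ∩ B₂`, which embeds in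
`(B₁ × B₂) ⧸ K`; lifting it in turn costs a second factor from `S`.

Conversely, given `f : M → M ⧸ K`, the map `(x, y) ↦ [(x, y)] + [(0, f x)]` onto
`(M × M) ⧸ (0 × K)` is surjective, hence a `u`-`S`-epimorphism, and the second component of
its lift, restricted to the first summand, lifts `s • f`. -/

open LinearMap

theorem LinearMap.exists_comp_eq_of_range_le {R A N P : Type*} [Semiring R]
    [AddCommMonoid A] [AddCommMonoid N] [AddCommMonoid P] [Module R A] [Module R N] [Module R P]
    {j : N →ₗ[R] P} (hj : Function.Injective j) {h : A →ₗ[R] P} (hle : range h ≤ range j) :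
    ∃ f : A →ₗ[R] N, j ∘ₗ f = h :=
  ⟨(LinearEquiv.ofInjective j hj).symm.toLinearMap ∘ₗ h.codRestrict _ fun x => hle ⟨x, rfl⟩,
    by ext x; simp⟩

section

variable {R : Type*} [CommRing R] {B₁ B₂ : Type*} [AddCommGroup B₁] [Module R B₁]
  [AddCommGroup B₂] [Module R B₂] (K : Submodule R (B₁ × B₂))

theorem Submodule.injective_mapQ_comap_inr :
    Function.Injective ((K.comap (inr R B₁ B₂)).mapQ K (inr R B₁ B₂) le_rfl) := by
  rw [← ker_eq_bot, Submodule.ker_mapQ, Submodule.mkQ_map_self]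

theorem Submodule.ker_mapQ_fst_eq_range_mapQ_inr :
    (K.mapQ (K.map (LinearMap.fst R B₁ B₂)) (LinearMap.fst R B₁ B₂)
      (K.le_comap_map (LinearMap.fst R B₁ B₂))).ker =
      ((K.comap (inr R B₁ B₂)).mapQ K (inr R B₁ B₂) le_rfl).range := by
  rw [Submodule.ker_mapQ, Submodule.comap_map_eq, Submodule.range_mapQ, Submodule.map_sup,
    Submodule.mkQ_map_self, bot_sup_eq, ker_fst]

end

section

variable {R : Type*} [CommRing R] {S : Set R}

theorem IsUSProjectiveRel.prod_right (hS : ∀ ⦃a b : R⦄, a ∈ S → b ∈ S → a * b ∈ S)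
    {A B₁ B₂ : Type*} [AddCommGroup A] [Module R A] [AddCommGroup B₁] [Module R B₁]
    [AddCommGroup B₂] [Module R B₂]
    (h₁ : IsUSProjectiveRel S A B₁) (h₂ : IsUSProjectiveRel S A B₂) :
    IsUSProjectiveRel S A (B₁ × B₂) := by
  intro K
  obtain ⟨s₁, hs₁, H₁⟩ := h₁ (K.map (LinearMap.fst R B₁ B₂))
  obtain ⟨s₂, hs₂, H₂⟩ := h₂ (K.comap (inr R B₁ B₂))
  refine ⟨s₁ * s₂, hS hs₁ hs₂, fun f => ?_⟩
  set p := K.mapQ _ _ (K.le_comap_map (LinearMap.fst R B₁ B₂))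
  set j := (K.comap (inr R B₁ B₂)).mapQ K (inr R B₁ B₂) le_rfl
  obtain ⟨g₁, hg₁⟩ := H₁ (p ∘ₗ f)
  set d := s₁ • f - K.mkQ ∘ₗ inl R B₁ B₂ ∘ₗ g₁
  have hd : range d ≤ range j := by
    rw [← K.ker_mapQ_fst_eq_range_mapQ_inr, range_le_ker_iff]
    simp only [d, comp_sub, comp_smul, hg₁, ← comp_assoc, p, Submodule.mapQ_mkQ]
    rw [comp_assoc (inl R B₁ B₂), fst_comp_inl, comp_id, sub_self]
  obtain ⟨f₂, hf₂⟩ := exists_comp_eq_of_range_le (j := j) K.injective_mapQ_comap_inr hd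
  obtain ⟨g₂, hg₂⟩ := H₂ f₂
  refine ⟨inl R B₁ B₂ ∘ₗ (s₂ • g₁) + inr R B₁ B₂ ∘ₗ g₂, ?_⟩
  calc (s₁ * s₂) • f = s₂ • d + K.mkQ ∘ₗ inl R B₁ B₂ ∘ₗ (s₂ • g₁) := by
        simp only [d, comp_smul]; module
    _ = j ∘ₗ (s₂ • f₂) + K.mkQ ∘ₗ inl R B₁ B₂ ∘ₗ (s₂ • g₁) := by simp only [← hf₂, comp_smul]
    _ = K.mkQ ∘ₗ (inl R B₁ B₂ ∘ₗ (s₂ • g₁) + inr R B₁ B₂ ∘ₗ g₂) := by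
        rw [hg₂, ← comp_assoc, Submodule.mapQ_mkQ, comp_add, add_comm, comp_assoc]

theorem IsUSProjectiveRel.prod_left (hS : ∀ ⦃a b : R⦄, a ∈ S → b ∈ S → a * b ∈ S)
    {A₁ A₂ B : Type*} [AddCommGroup A₁] [Module R A₁] [AddCommGroup A₂] [Module R A₂]
    [AddCommGroup B] [Module R B]
    (h₁ : IsUSProjectiveRel S A₁ B) (h₂ : IsUSProjectiveRel S A₂ B) :
    IsUSProjectiveRel S (A₁ × A₂) B := by
  intro K
  obtain ⟨s₁, hs₁, H₁⟩ := h₁ K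
  obtain ⟨s₂, hs₂, H₂⟩ := h₂ K
  refine ⟨s₁ * s₂, hS hs₁ hs₂, fun f => ?_⟩
  obtain ⟨g₁, hg₁⟩ := H₁ (f ∘ₗ inl R A₁ A₂)
  obtain ⟨g₂, hg₂⟩ := H₂ (f ∘ₗ inr R A₁ A₂)
  refine ⟨(s₂ • g₁).coprod (s₁ • g₂), prod_ext ?_ ?_⟩
  · rw [comp_assoc, coprod_inl, comp_smul, ← hg₁, smul_comp, smul_smul, mul_comm]
  · rw [comp_assoc, coprod_inr, comp_smul, ← hg₂, smul_comp, smul_smul]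

theorem isUSEpi_of_surjective (h1 : 1 ∈ S) {M N : Type*} [AddCommGroup M] [Module R M]
    [AddCommGroup N] [Module R N] {f : M →ₗ[R] N} (hf : Function.Surjective f) : IsUSEpi S f :=
  ⟨1, h1, fun n => (one_smul R n).symm ▸ hf n⟩

theorem IsUSQuasiProjective.isUSPseudoProjective {P : Type*} [AddCommGroup P] [Module R P]
    (h : IsUSQuasiProjective S P) : IsUSPseudoProjective S P := fun K =>
  let ⟨s, hs, H⟩ := h K
  ⟨s, hs, fun f _ => H f⟩

theorem IsUSPseudoProjective.isUSProjectiveRel_of_prod (h1 : 1 ∈ S) {M N : Type*}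
    [AddCommGroup M] [Module R M] [AddCommGroup N] [Module R N]
    (h : IsUSPseudoProjective S (M × N)) : IsUSProjectiveRel S M N := by
  intro K
  set K' : Submodule R (M × N) := (⊥ : Submodule R M).prod K
  obtain ⟨s, hs, H⟩ := h K'
  refine ⟨s, hs, fun f => ?_⟩
  set e := K.mapQ K' (inr R M N) fun y hy => ⟨(⊥ : Submodule R M).zero_mem, hy⟩
  set r := K'.mapQ K (snd R M N) fun z hz => hz.2
  have hr : r ∘ₗ K'.mkQ = K.mkQ ∘ₗ snd R M N := Submodule.mapQ_mkQ _ _ _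
  have he : e ∘ₗ K.mkQ = K'.mkQ ∘ₗ inr R M N := Submodule.mapQ_mkQ _ _ _
  have hre : ∀ y, r (e y) = y := by rintro ⟨y⟩; rfl
  set F := K'.mkQ + e ∘ₗ f ∘ₗ fst R M N
  have hF : Function.Surjective F := by
    intro c
    obtain ⟨z, rfl⟩ := K'.mkQ_surjective c
    obtain ⟨w, hw⟩ := K.mkQ_surjective (f z.1)
    refine ⟨(z.1, z.2 - w), ?_⟩
    change K'.mkQ (z.1, z.2 - w) + e (f z.1) = K'.mkQ z
    rw [← hw, ← comp_apply e, he, comp_apply, ← map_add]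
    congr 1
    ext <;> simp
  obtain ⟨g, hg⟩ := H F (isUSEpi_of_surjective h1 hF)
  refine ⟨snd R M N ∘ₗ g ∘ₗ inl R M N, ?_⟩
  have hrF : r ∘ₗ F ∘ₗ inl R M N = f := by
    ext x
    simpa [F, hre] using congr($hr (x, 0))
  calc s • f = r ∘ₗ (s • F) ∘ₗ inl R M N := by rw [smul_comp, comp_smul, hrF]
    _ = K.mkQ ∘ₗ snd R M N ∘ₗ g ∘ₗ inl R M N := by
      simp only [hg, ← comp_assoc, hr]

theorem isUSQuasiProjective_iff_isUSProjectiveRel_self {M : Type*} [AddCommGroup M]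
    [Module R M] : IsUSQuasiProjective S M ↔ IsUSProjectiveRel S M M :=
  Iff.rfl

theorem IsUSQuasiProjective.prod_self (hS : ∀ ⦃a b : R⦄, a ∈ S → b ∈ S → a * b ∈ S)
    {M : Type*} [AddCommGroup M] [Module R M] (h : IsUSQuasiProjective S M) :
    IsUSQuasiProjective S (M × M) := by
  rw [isUSQuasiProjective_iff_isUSProjectiveRel_self] at h ⊢
  have hMM : IsUSProjectiveRel S M (M × M) := h.prod_right hS h
  exact hMM.prod_left hS hMM

end

/-- `M` is `u`-`S`-quasi-projective if and only if `M ⊕ M` is `u`-`S`-pseudo-projective. -/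
theorem uSQuasiProjective_iff_prod_self_uSPseudoProjective
    {R : Type u} [CommRing R] (S : Set R) (hS : IsMultSubset S)
    {M : Type v} [AddCommGroup M] [Module R M] :
    IsUSQuasiProjective S M ↔ IsUSPseudoProjective S (M × M) :=
  ⟨fun h => (h.prod_self hS.2.2).isUSPseudoProjective,
    fun h => isUSQuasiProjective_iff_isUSProjectiveRel_self.2 (h.isUSProjectiveRel_of_prod hS.1)⟩
end

section
/- Let R be a commutative ring, S a multiplicative subset of R, and A, B R-modules. If A ⊕ B is u-S-pseudo-projective, then every u-S-epimorphism f : A → B u-S-splits; that is, there exist s ∈ S and an R-homomorphism g : B → A such that f ∘ g = s·1_B. -/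
/-!  Definitions for uniformly-S-pseudo-projective modules
(M. Adarbeh, M. Saleh, "Uniformly-S-pseudo-projective modules"). -/

universe u v w

/-!
Take `K = ker (f ∘ fst)` in `A × B`, so that `(A × B) ⧸ K ≅ range f`. If `s₀` witnesses that `f`
is a `u`-`S`-epimorphism, then `(a, b) ↦ s₀ • b` is a `u`-`S`-epimorphism `A × B → range f`, and
lifting it along the quotient map through the pseudo-projectivity of `A × B` gives an
endomorphism `g` with `f ∘ fst ∘ g = s • s₀ • snd`; restricted to `B` this is the splitting
`fst ∘ g ∘ inr`.
-/

section

variable {R : Type u} [CommRing R] {S : Set R}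

theorem IsUSEpi.linearEquiv_comp {M : Type v} {N : Type w} {N' : Type*} [AddCommGroup M]
    [Module R M] [AddCommGroup N] [Module R N] [AddCommGroup N'] [Module R N']
    {k : M →ₗ[R] N} (hk : IsUSEpi S k) (e : N ≃ₗ[R] N') :
    IsUSEpi S (e.toLinearMap ∘ₗ k) := by
  obtain ⟨s, hs, hsk⟩ := hk
  refine ⟨s, hs, fun n => ?_⟩
  obtain ⟨m, hm⟩ := hsk (e.symm n)
  exact ⟨m, by simp [hm]⟩

/-- Pseudo-projectivity of `P` read through `P ⧸ ker φ ≅ range φ`. -/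
theorem IsUSPseudoProjective.exists_comp_eq_smul {P : Type v} {N : Type w} [AddCommGroup P]
    [Module R P] [AddCommGroup N] [Module R N] (hP : IsUSPseudoProjective S P)
    (φ h : P →ₗ[R] N) (hle : LinearMap.range h ≤ LinearMap.range φ)
    (hepi : ∃ s ∈ S, ∀ x, s • φ x ∈ LinearMap.range h) :
    ∃ s ∈ S, ∃ g : P →ₗ[R] P, φ ∘ₗ g = s • h := by
  set e := φ.quotKerEquivRange
  set h' := h.codRestrict (LinearMap.range φ) fun x => hle ⟨x, rfl⟩
  have h'_epi : IsUSEpi S h' := by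
    obtain ⟨s, hs, hsφ⟩ := hepi
    refine ⟨s, hs, fun ⟨_, x, rfl⟩ => ?_⟩
    obtain ⟨y, hy⟩ := hsφ x
    exact ⟨y, Subtype.ext hy⟩
  obtain ⟨s, hs, hlift⟩ := hP (LinearMap.ker φ)
  obtain ⟨g, hg⟩ := hlift _ (h'_epi.linearEquiv_comp e.symm)
  refine ⟨s, hs, g, LinearMap.ext fun x => ?_⟩
  have hx := congrArg (fun k => (e (k x) : N)) hg
  simpa [e, h', LinearMap.quotKerEquivRange_apply_mk] using hx.symm

end

/-- If `A ⊕ B` is `u`-`S`-pseudo-projective, then every `u`-`S`-epimorphism `f : A → B`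
`u`-`S`-splits: there are `s ∈ S` and `g : B → A` with `f ∘ g = s • 1_B`. -/
theorem uSEpi_uSSplits_of_prod_uSPseudoProjective
    {R : Type u} [CommRing R] (S : Set R) (hS : IsMultSubset S)
    {A B : Type v} [AddCommGroup A] [Module R A] [AddCommGroup B] [Module R B]
    (hAB : IsUSPseudoProjective S (A × B)) (f : A →ₗ[R] B) (hf : IsUSEpi S f) :
    ∃ s ∈ S, ∃ g : B →ₗ[R] A, f.comp g = s • (LinearMap.id : B →ₗ[R] B) := by
  obtain ⟨s₀, hs₀, hs₀f⟩ := hf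
  have hle : LinearMap.range (s₀ • LinearMap.snd R A B) ≤
      LinearMap.range (f ∘ₗ LinearMap.fst R A B) := by
    rintro _ ⟨⟨_, b⟩, rfl⟩
    obtain ⟨a, ha⟩ := hs₀f b
    exact ⟨(a, 0), ha⟩
  have hepi : ∀ x : A × B, s₀ • f x.1 ∈ LinearMap.range (s₀ • LinearMap.snd R A B) :=
    fun x => ⟨(0, f x.1), rfl⟩
  obtain ⟨s, hs, g, hg⟩ := hAB.exists_comp_eq_smul _ _ hle ⟨s₀, hs₀, hepi⟩
  refine ⟨s * s₀, hS.2.2 hs hs₀, LinearMap.fst R A B ∘ₗ g ∘ₗ LinearMap.inr R A B,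
    LinearMap.ext fun b => ?_⟩
  simpa [mul_smul] using LinearMap.congr_fun hg (0, b)
end
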